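/- arXiv:math/0603681 — 3 statements merged into one kernel-verified Lean document; each statement's English description precedes it below -/
import Mathlib

section
/- For all real x₀, y₀, y₁, the polynomial p(s) = y₀ + y₁ s + 2x₀ s² + 2s³ + x₀ s⁴ + s⁵ is not stable, i.e., it has at least one complex root s with Re(s) ≥ 0. -/
/-!
If all roots rᵢ of a real monic polynomial lie in Re s < 0 and eₖ are their elementary symmetric
functions, Newton's identity gives 3 (e₁e₂ − e₃) = e₁³ − ∑ rᵢ³. Since e₁ is real,
Re (e₁³) = (∑ Re rᵢ)³, while Re (rᵢ³) = (Re rᵢ)³ − 3 Re rᵢ (Im rᵢ)² ≥ (Re rᵢ)³, and for at least two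
negative reals (∑ aᵢ)³ < ∑ aᵢ³. Hence e₁e₂ − e₃ < 0: in terms of the coefficients,
cₙ₋₃ < cₙ₋₁ cₙ₋₂, which is the second Hurwitz condition. For
s⁵ + x₀ s⁴ + 2 s³ + 2x₀ s² + y₁ s + y₀ both sides equal 2x₀.
-/

open Polynomial

namespace Multiset

theorem esymm_cons_succ {R : Type*} [CommSemiring R] (a : R) (s : Multiset R) (k : ℕ) :
    (a ::ₘ s).esymm (k + 1) = s.esymm (k + 1) + a * s.esymm k := by
  simp [esymm, powersetCard_cons, map_map, sum_map_mul_left]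

theorem esymm_one_eq_sum {R : Type*} [CommSemiring R] (s : Multiset R) : s.esymm 1 = s.sum := by
  simp [esymm, powersetCard_one, map_map]

theorem three_mul_esymm_one_mul_esymm_two_sub_esymm_three {R : Type*} [CommRing R]
    (s : Multiset R) :
    3 * (s.esymm 1 * s.esymm 2 - s.esymm 3) = s.esymm 1 ^ 3 - (s.map (· ^ 3)).sum := by
  induction s using Multiset.induction_on with
  | empty => simp [esymm, powersetCard_zero_right]
  | cons a s ih =>
    have h0 : s.esymm 0 = 1 := by simp [esymm]
    simp only [esymm_cons_succ, h0, map_cons, sum_cons]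
    linear_combination ih

theorem sum_nonpos {s : Multiset ℝ} (hs : ∀ a ∈ s, a ≤ 0) : s.sum ≤ 0 := by
  simpa using sum_map_le_sum_map id (fun _ ↦ (0 : ℝ)) hs

theorem sum_pow_three_le_sum_map_pow_three {s : Multiset ℝ} (hs : ∀ a ∈ s, a ≤ 0) :
    s.sum ^ 3 ≤ (s.map (· ^ 3)).sum := by
  induction s using Multiset.induction_on with
  | empty => simp
  | cons a s ih =>
    have ha : a ≤ 0 := hs a (mem_cons_self a s)
    have ht : ∀ b ∈ s, b ≤ 0 := fun b hb ↦ hs b (mem_cons_of_mem hb)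
    have htsum : s.sum ≤ 0 := sum_nonpos ht
    rw [sum_cons, map_cons, sum_cons]
    nlinarith [ih ht, mul_nonpos_of_nonneg_of_nonpos (mul_nonneg_of_nonpos_of_nonpos ha htsum)
      (add_nonpos ha htsum)]

theorem sum_pow_three_lt_sum_map_pow_three {s : Multiset ℝ} (hs : ∀ a ∈ s, a < 0)
    (hcard : 2 ≤ card s) : s.sum ^ 3 < (s.map (· ^ 3)).sum := by
  obtain ⟨a, t, rfl⟩ : ∃ a t, s = a ::ₘ t := by
    obtain ⟨a, ha⟩ := card_pos_iff_exists_mem.1 (by omega : 0 < card s)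
    exact ⟨a, s.erase a, (cons_erase ha).symm⟩
  have ha : a < 0 := hs a (mem_cons_self a t)
  have ht : ∀ b ∈ t, b < 0 := fun b hb ↦ hs b (mem_cons_of_mem hb)
  have htsum : t.sum < 0 := by
    have hne : t ≠ 0 := card_pos.1 (by simp only [card_cons, Nat.reduceLeDiff] at hcard; omega)
    simpa using sum_lt_sum_of_nonempty hne (f := id) (g := fun _ ↦ (0 : ℝ)) ht
  rw [sum_cons, map_cons, sum_cons]
  nlinarith [sum_pow_three_le_sum_map_pow_three fun b hb ↦ (ht b hb).le,
    mul_neg_of_pos_of_neg (mul_pos_of_neg_of_neg ha htsum) (add_neg ha htsum)]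

end Multiset

namespace Complex

theorem re_multiset_sum_map {α : Type*} (s : Multiset α) (f : α → ℂ) :
    (s.map f).sum.re = (s.map fun a ↦ (f a).re).sum := by
  induction s using Multiset.induction_on <;> simp [*]

theorem re_pow_three (z : ℂ) : (z ^ 3).re = z.re ^ 3 - 3 * z.re * z.im ^ 2 := by
  simp only [pow_succ, pow_zero, one_mul, mul_re, mul_im]
  ring

theorem re_sum_pow_three_lt_re_sum_map_pow_three {s : Multiset ℂ}
    (hs : ∀ z ∈ s, z.re < 0) (hcard : 2 ≤ Multiset.card s) (him : s.sum.im = 0) :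
    (s.sum ^ 3).re < ((s.map (· ^ 3)).sum).re := by
  have hreal : s.sum = (s.sum.re : ℂ) := ext rfl (by simp [him])
  have hsum_re : s.sum.re = (s.map re).sum := by simpa using re_multiset_sum_map s id
  calc (s.sum ^ 3).re = (s.map re).sum ^ 3 := by
        rw [hreal, ← ofReal_pow, ofReal_re, hsum_re]
    _ < ((s.map re).map (· ^ 3)).sum :=
        Multiset.sum_pow_three_lt_sum_map_pow_three (by simpa using hs) (by simpa using hcard)
    _ ≤ (s.map fun z ↦ (z ^ 3).re).sum := by
        rw [Multiset.map_map]
        refine Multiset.sum_map_le_sum_map _ _ fun z hz ↦ ?_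
        have hz_re := hs z hz
        simp only [Function.comp_apply, re_pow_three]
        nlinarith [sq_nonneg z.im]
    _ = _ := (re_multiset_sum_map s _).symm

end Complex

namespace Polynomial

def IsHurwitzStable (p : ℝ[X]) : Prop := ∀ z ∈ p.aroots ℂ, z.re < 0

theorem IsHurwitzStable.coeff_sub_three_lt {p : ℝ[X]} (hstable : p.IsHurwitzStable)
    (hp : p.Monic) (hdeg : 3 ≤ p.natDegree) :
    p.coeff (p.natDegree - 3) < p.coeff (p.natDegree - 1) * p.coeff (p.natDegree - 2) := by
  set n := p.natDegree
  set q := p.map (algebraMap ℝ ℂ)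
  have hqdeg : q.natDegree = n := natDegree_map _
  have hcard : Multiset.card (p.aroots ℂ) = n := by
    rw [← hqdeg]; exact splits_iff_card_roots.1 (IsAlgClosed.splits q)
  have vieta : ∀ k ≤ n, (p.coeff (n - k) : ℂ) = (-1) ^ k * (p.aroots ℂ).esymm k := by
    intro k hk
    have := coeff_eq_esymm_roots_of_card (p := q) (by rwa [hqdeg]) (k := n - k) (by omega)
    rwa [hqdeg, (hp.map _).leadingCoeff, coeff_map, Nat.sub_sub_self hk, one_mul] at this
  have h1 := vieta 1 (by omega)
  have h2 := vieta 2 (by omega)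
  have h3 := vieta 3 (by omega)
  rw [Multiset.esymm_one_eq_sum] at h1
  have him : (p.aroots ℂ).sum.im = 0 := by simpa using congrArg Complex.im h1
  have newton := Multiset.three_mul_esymm_one_mul_esymm_two_sub_esymm_three (p.aroots ℂ)
  rw [Multiset.esymm_one_eq_sum] at newton
  have hgap : ((3 * (p.coeff (n - 1) * p.coeff (n - 2) - p.coeff (n - 3)) : ℝ) : ℂ) =
      ((p.aroots ℂ).map (· ^ 3)).sum - (p.aroots ℂ).sum ^ 3 := by
    push_cast
    rw [h1, h2, h3]
    linear_combination (-1 : ℂ) * newton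
  have hgap_re := congrArg Complex.re hgap
  rw [Complex.ofReal_re, Complex.sub_re] at hgap_re
  linarith [Complex.re_sum_pow_three_lt_re_sum_map_pow_three hstable (by omega) him]

end Polynomial

theorem stmt_2 (x₀ y₀ y₁ : ℝ) :
    ∃ s : ℂ, (y₀ : ℂ) + y₁ * s + 2 * x₀ * s ^ 2 + 2 * s ^ 3 + x₀ * s ^ 4 + s ^ 5 = 0 ∧
      0 ≤ s.re := by
  set p : ℝ[X] := X ^ 5 + C x₀ * X ^ 4 + C 2 * X ^ 3 + C (2 * x₀) * X ^ 2 + C y₁ * X + C y₀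
  have hdeg : p.natDegree = 5 := by unfold p; compute_degree!
  have hmonic : p.Monic := by unfold p; monicity!
  by_contra! hunstable
  have hstable : p.IsHurwitzStable := by
    intro z hz
    refine hunstable z ?_
    have hroot := (mem_aroots.1 hz).2
    simp only [p, map_mul, map_add, map_pow, aeval_X, aeval_C, Complex.coe_algebraMap,
      Complex.ofReal_ofNat] at hroot
    linear_combination hroot
  have hurwitz := hstable.coeff_sub_three_lt hmonic (by omega)
  obtain ⟨h2, h3, h4⟩ : p.coeff 2 = 2 * x₀ ∧ p.coeff 3 = 2 ∧ p.coeff 4 = x₀ := by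
    simp [p, -map_mul]
  rw [hdeg, h2, h3, h4] at hurwitz
  linarith
end

section
/- With a third-order controller, the infimum over controller coefficients of the abscissa of the closed-loop polynomial (s⁴+2s²)(x₀+x₁s+x₂s²+s³)+y₀+y₁s+y₂s²+y₃s³ is −∞; i.e., for every real M there exist real coefficients x₀,x₁,x₂,y₀,y₁,y₂,y₃ such that every complex root s of this polynomial satisfies Re(s) < M. -/
/-! Pole placement: the closed-loop polynomial is monic of degree 7 with lower coefficients
`x₂, x₁ + 2, x₀ + 2x₂, 2x₁ + y₃, 2x₀ + y₂, y₁, y₀` (from `s⁶` down), a triangular system that can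
be solved for any prescribed values. Prescribing those of `(s + a)⁷` leaves `-a` as the only root,
and `a = 1 - M` puts it to the left of `M`. -/

theorem closedLoop_eq_add_pow_seven (a s : ℂ) :
    (s ^ 4 + 2 * s ^ 2) * ((35 * a ^ 3 - 14 * a) + (21 * a ^ 2 - 2) * s + 7 * a * s ^ 2 + s ^ 3) +
        a ^ 7 + 7 * a ^ 6 * s + (21 * a ^ 5 - 2 * (35 * a ^ 3 - 14 * a)) * s ^ 2 +
        (35 * a ^ 4 - 2 * (21 * a ^ 2 - 2)) * s ^ 3 = (s + a) ^ 7 := by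
  ring

theorem stmt_6 (M : ℝ) :
    ∃ x₀ x₁ x₂ y₀ y₁ y₂ y₃ : ℝ, ∀ s : ℂ,
      (s ^ 4 + 2 * s ^ 2) * ((x₀ : ℂ) + x₁ * s + x₂ * s ^ 2 + s ^ 3) +
        y₀ + y₁ * s + y₂ * s ^ 2 + y₃ * s ^ 3 = 0 → s.re < M := by
  set a : ℝ := 1 - M
  refine ⟨35 * a ^ 3 - 14 * a, 21 * a ^ 2 - 2, 7 * a, a ^ 7, 7 * a ^ 6,
    21 * a ^ 5 - 2 * (35 * a ^ 3 - 14 * a), 35 * a ^ 4 - 2 * (21 * a ^ 2 - 2), ?_⟩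
  intro s hs
  push_cast at hs
  rw [closedLoop_eq_add_pow_seven] at hs
  have hs_eq : s = -(a : ℂ) := eq_neg_of_add_eq_zero_left (pow_eq_zero_iff (by norm_num) |>.mp hs)
  rw [hs_eq, Complex.neg_re, Complex.ofReal_re]
  linarith
end

section
/- Suppose z is real and nonzero, and real numbers x₀, x₁, y₀, y₁, y₂ satisfy (s⁴+2s²)(x₀+x₁s+s²) + y₀+y₁s+y₂s² = (s−z)⁶ as polynomials in s. Then z = √15/5 or z = −√15/5. -/
/-! Only the odd coefficients of the identity matter: the coefficient of `s⁵` gives `x₁ = -6z`,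
the coefficient of `s³` gives `2x₁ = -20z³`, so `5z³ = 3z`, and `z ≠ 0` leaves `z² = 3/5`. -/

open Polynomial

theorem Polynomial.coeff_X_sub_C_pow {R : Type*} [CommRing R] (r : R) (n k : ℕ) :
    ((X - C r) ^ n).coeff k = (-r) ^ (n - k) * (n.choose k : R) := by
  rw [sub_eq_add_neg, ← C_neg, coeff_X_add_C_pow]

theorem closedLoop_coeff_five_and_three {R : Type*} [CommRing R] [IsDomain R] [Infinite R]
    {z x₀ x₁ y₀ y₁ y₂ : R}
    (h : ∀ s : R, (s ^ 4 + 2 * s ^ 2) * (x₀ + x₁ * s + s ^ 2) + y₀ + y₁ * s + y₂ * s ^ 2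
      = (s - z) ^ 6) :
    x₁ = -6 * z ∧ 2 * x₁ = -20 * z ^ 3 := by
  have hp : X ^ 6 + C x₁ * X ^ 5 + C (x₀ + 2) * X ^ 4 + C (2 * x₁) * X ^ 3
      + C (2 * x₀ + y₂) * X ^ 2 + C y₁ * X ^ 1 + C y₀ * X ^ 0 = (X - C z) ^ 6 :=
    Polynomial.funext fun s => by
      simp only [eval_add, eval_sub, eval_mul, eval_pow, eval_C, eval_X, ← h s]
      ring
  have h5 := congrArg (coeff · 5) hp
  have h3 := congrArg (coeff · 3) hp
  simp only [coeff_add, coeff_X_pow, coeff_C_mul_X_pow, coeff_X_sub_C_pow] at h5 h3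
  norm_num [Nat.choose] at h5 h3
  exact ⟨by linear_combination h5, by linear_combination h3⟩

theorem eq_sqrt_fifteen_div_five_or_neg {z : ℝ} (hz : z ≠ 0) (h : 5 * z ^ 3 = 3 * z) :
    z = √15 / 5 ∨ z = -(√15 / 5) := by
  have hsq : z ^ 2 = (√15 / 5) ^ 2 := by
    have h15 : √15 ^ 2 = 15 := Real.sq_sqrt (by norm_num)
    have : z * (5 * z ^ 2 - 3) = 0 := by linear_combination h
    rw [div_pow, h15]
    linear_combination (mul_eq_zero.mp this).resolve_left hz / 5
  exact sq_eq_sq_iff_eq_or_eq_neg.mp hsq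

theorem stmt_7 (z x₀ x₁ y₀ y₁ y₂ : ℝ) (hz : z ≠ 0)
    (h : ∀ s : ℂ, (s ^ 4 + 2 * s ^ 2) * ((x₀ : ℂ) + x₁ * s + s ^ 2) +
        y₀ + y₁ * s + y₂ * s ^ 2 = (s - z) ^ 6) :
    z = Real.sqrt 15 / 5 ∨ z = -(Real.sqrt 15 / 5) := by
  obtain ⟨h5, h3⟩ := closedLoop_coeff_five_and_three h
  have hcube : (5 * z ^ 3 : ℂ) = 3 * z := by linear_combination h3 / 4 - h5 / 2
  exact eq_sqrt_fifteen_div_five_or_neg hz (by exact_mod_cast hcube)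
end
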